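/- arXiv:2111.11561 — 4 statements merged into one kernel-verified Lean document; each statement's English description precedes it below -/
import Mathlib

section
/- Let v ∈ ℝ⁴ be a stationary distribution of M(p,q) (vᵀM = vᵀ, v₁+v₂+v₃+v₄ = 1) whose left-kernel of M−I is one-dimensional, and suppose D(p,q,𝟙) ≠ 0. Then for every f ∈ ℝ⁴, v·f = D(p,q,f)/D(p,q,𝟙). -/
/-!
`D(p,q,f)` is linear in its last column: `D(p,q,f) = W ⬝ᵥ f` for the row `W` of cofactors of that
column, and `W` is orthogonal to the other three columns. Since the rows of `M - 1` sum to zero,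
every column of `M - 1` is a combination of those three columns, so `W ᵥ* (M - 1) = 0`. The
left kernel being a line gives `W = c • v`, hence `D(p,q,f) = c (v ⬝ᵥ f)` and `D(p,q,𝟙) = c`.
-/

open Matrix

def ipdMatrix (p q : Fin 4 → ℝ) : Matrix (Fin 4) (Fin 4) ℝ :=
  !![p 0 * q 0, p 0 * (1 - q 0), (1 - p 0) * q 0, (1 - p 0) * (1 - q 0);
     p 1 * q 2, p 1 * (1 - q 2), (1 - p 1) * q 2, (1 - p 1) * (1 - q 2);
     p 2 * q 1, p 2 * (1 - q 1), (1 - p 2) * q 1, (1 - p 2) * (1 - q 1);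
     p 3 * q 3, p 3 * (1 - q 3), (1 - p 3) * q 3, (1 - p 3) * (1 - q 3)]

def pdMatrix (p q f : Fin 4 → ℝ) : Matrix (Fin 4) (Fin 4) ℝ :=
  !![p 0 * q 0 - 1, p 0 - 1, q 0 - 1, f 0;
     p 1 * q 2,     p 1 - 1, q 2,     f 1;
     p 2 * q 1,     p 2,     q 1 - 1, f 2;
     p 3 * q 3,     p 3,     q 3,     f 3]

namespace Matrix

variable {n R : Type*} [Fintype n] [DecidableEq n] [CommRing R]

theorem det_updateCol_eq_adjugate_dotProduct (A : Matrix n n R) (j : n) (b : n → R) :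
    (A.updateCol j b).det = A.adjugate j ⬝ᵥ b := by
  rw [← cramer_apply, cramer_eq_adjugate_mulVec]
  rfl

theorem adjugate_row_vecMul_mul_eq_zero (A E : Matrix n n R) (j : n) (hE : E j = 0) :
    A.adjugate j ᵥ* (A * E) = 0 := by
  rw [← vecMul_vecMul, ← mul_apply_eq_vecMul, adjugate_mul]
  ext k
  simp [vecMul, dotProduct, one_apply, hE]

end Matrix

theorem pdMatrix_eq_updateCol (p q f : Fin 4 → ℝ) :
    pdMatrix p q f = (pdMatrix p q 0).updateCol 3 f := by
  ext i j
  fin_cases i <;> fin_cases j <;> rfl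

/-- Undoes the column operations `col₁ += col₀`, `col₂ += col₀` that produce `D(p,q,·)` from
`M - 1`; the last column of `M - 1` is minus the sum of the others. -/
def pdColumnOps : Matrix (Fin 4) (Fin 4) ℝ :=
  !![1, -1, -1, 1;
     0, 1, 0, -1;
     0, 0, 1, -1;
     0, 0, 0, 0]

theorem ipdMatrix_sub_one_eq_pdMatrix_mul (p q : Fin 4 → ℝ) :
    ipdMatrix p q - 1 = pdMatrix p q 0 * pdColumnOps := by
  ext i j
  fin_cases i <;> fin_cases j <;>
    simp [ipdMatrix, pdMatrix, pdColumnOps, mul_apply, Fin.sum_univ_four, one_apply] <;> ring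

theorem stationary_dot_eq_det_ratio_general (p q v : Fin 4 → ℝ)
    (hsum : ∑ i, v i = 1)
    (hker : ∀ w : Fin 4 → ℝ, w ᵥ* (ipdMatrix p q - 1) = 0 → ∃ c : ℝ, w = c • v)
    (hD : (pdMatrix p q (fun _ => 1)).det ≠ 0) :
    ∀ f : Fin 4 → ℝ,
      v ⬝ᵥ f = (pdMatrix p q f).det / (pdMatrix p q (fun _ => 1)).det := by
  intro f
  set W := (pdMatrix p q 0).adjugate 3
  have hdet : ∀ g, (pdMatrix p q g).det = W ⬝ᵥ g := fun g => by
    rw [pdMatrix_eq_updateCol, det_updateCol_eq_adjugate_dotProduct]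
  have hW : W ᵥ* (ipdMatrix p q - 1) = 0 := by
    rw [ipdMatrix_sub_one_eq_pdMatrix_mul]
    exact adjugate_row_vecMul_mul_eq_zero _ _ _ (by ext j; fin_cases j <;> rfl)
  obtain ⟨c, hc⟩ := hker W hW
  have hD_eq : (pdMatrix p q (fun _ => 1)).det = c := by
    rw [hdet, hc, smul_dotProduct, ← Pi.one_def, dotProduct_one, hsum, smul_eq_mul, mul_one]
  rw [hdet, hc, smul_dotProduct, smul_eq_mul, hD_eq, mul_div_cancel_left₀ _ (hD_eq ▸ hD)]

/-- Press–Dyson formula: for a stationary distribution v of M(p,q) with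
one-dimensional left kernel of M − I and D(p,q,𝟙) ≠ 0, one has
v·f = D(p,q,f)/D(p,q,𝟙). -/
theorem stationary_dot_eq_det_ratio (p q v : Fin 4 → ℝ)
    (hstat : v ᵥ* ipdMatrix p q = v)
    (hsum : ∑ i, v i = 1)
    (hker : ∀ w : Fin 4 → ℝ, w ᵥ* (ipdMatrix p q - 1) = 0 → ∃ c : ℝ, w = c • v)
    (hD : (pdMatrix p q (fun _ => 1)).det ≠ 0) :
    ∀ f : Fin 4 → ℝ,
      v ⬝ᵥ f = (pdMatrix p q f).det / (pdMatrix p q (fun _ => 1)).det :=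
  stationary_dot_eq_det_ratio_general p q v hsum hker hD
end

section
/- Suppose T > R > P > S. Define p₂ = ((1+p₄)(R−S) − p₁(P−S))/(R−P) and p₃ = (−(1−p₁)(T−P) − p₄(T−R))/(R−P) for p₁, p₄ ∈ [0,1]. Then p₂ ≥ 1 and p₃ ≤ 0 always hold; consequently the only choice with all of p₁,p₂,p₃,p₄ ∈ [0,1] is p = (1,1,0,0). -/
/-!
Writing `d = R - P > 0`, the two formulas rearrange to
`p₂ = 1 + ((1 - p₁)(P - S) + p₄(R - S)) / d` and `p₃ = -((1 - p₁)(T - P) + p₄(T - R)) / d`,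
where both numerators are sums of nonnegative weights times positive payoff gaps.
Hence `p₂ ≥ 1` and `p₃ ≤ 0`, and `p₂ ≤ 1` forces both weights `1 - p₁` and `p₄` to vanish.
-/

lemma eq_zero_and_eq_zero_of_mul_add_mul_nonpos {α : Type*} [Semiring α] [LinearOrder α]
    [IsStrictOrderedRing α] {a b x y : α} (ha : 0 ≤ a) (hb : 0 ≤ b) (hx : 0 < x) (hy : 0 < y)
    (h : a * x + b * y ≤ 0) : a = 0 ∧ b = 0 := by
  obtain ⟨hax, hby⟩ := (add_eq_zero_iff_of_nonneg (mul_nonneg ha hx.le) (mul_nonneg hb hy.le)).1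
    (h.antisymm (add_nonneg (mul_nonneg ha hx.le) (mul_nonneg hb hy.le)))
  exact ⟨(le_of_not_gt fun ha' => (mul_pos ha' hx).ne' hax).antisymm ha,
    (le_of_not_gt fun hb' => (mul_pos hb' hy).ne' hby).antisymm hb⟩

/-- When X tries to set her own score, always p₂ ≥ 1 and p₃ ≤ 0, so the only
probability vector is p = (1,1,0,0). -/
theorem zd_own_score_impossible (T R P S p1 p4 : ℝ)
    (hTR : T > R) (hRP : R > P) (hPS : P > S)
    (hp1 : p1 ∈ Set.Icc (0 : ℝ) 1) (hp4 : p4 ∈ Set.Icc (0 : ℝ) 1) :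
    let p2 := ((1 + p4) * (R - S) - p1 * (P - S)) / (R - P)
    let p3 := (-(1 - p1) * (T - P) - p4 * (T - R)) / (R - P)
    1 ≤ p2 ∧ p3 ≤ 0 ∧
      (p2 ∈ Set.Icc (0 : ℝ) 1 ∧ p3 ∈ Set.Icc (0 : ℝ) 1 →
        p1 = 1 ∧ p2 = 1 ∧ p3 = 0 ∧ p4 = 0) := by
  intro p2 p3
  obtain ⟨-, hp1_le⟩ := hp1
  obtain ⟨hp4_nonneg, -⟩ := hp4
  have hd : 0 < R - P := sub_pos.2 hRP
  have hq1 : 0 ≤ 1 - p1 := sub_nonneg.2 hp1_le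
  set excess := (1 - p1) * (P - S) + p4 * (R - S)
  have hp2 : p2 = 1 + excess / (R - P) := by
    simp only [p2, excess]
    field_simp
    ring
  have hp3 : p3 = -(((1 - p1) * (T - P) + p4 * (T - R)) / (R - P)) := by
    simp only [p3]
    ring
  have hexcess_nonneg : 0 ≤ excess :=
    add_nonneg (mul_nonneg hq1 (sub_pos.2 hPS).le) (mul_nonneg hp4_nonneg (sub_pos.2 (hRP.trans' hPS)).le)
  refine ⟨?_, ?_, ?_⟩
  · rw [hp2]
    exact le_add_of_nonneg_right (div_nonneg hexcess_nonneg hd.le)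
  · rw [hp3, neg_nonpos]
    exact div_nonneg (add_nonneg (mul_nonneg hq1 (sub_pos.2 (hTR.trans' hRP)).le)
      (mul_nonneg hp4_nonneg (sub_pos.2 hTR).le)) hd.le
  rintro ⟨⟨-, hp2_le⟩, -⟩
  have hexcess_nonpos : excess ≤ 0 := by
    rw [hp2, add_le_iff_nonpos_right, div_nonpos_iff] at hp2_le
    rcases hp2_le with ⟨-, hneg⟩ | ⟨h, -⟩
    · exact absurd hneg (not_le.2 hd)
    · exact h
  obtain ⟨hq1_zero, hp4_zero⟩ := eq_zero_and_eq_zero_of_mul_add_mul_nonpos hq1 hp4_nonneg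
    (sub_pos.2 hPS) (sub_pos.2 (hRP.trans' hPS)) hexcess_nonpos
  have hp1_one : p1 = 1 := (sub_eq_zero.1 hq1_zero).symm
  refine ⟨hp1_one, ?_, ?_, hp4_zero⟩
  · simp [hp2, excess, hq1_zero, hp4_zero]
  · simp [hp3, hq1_zero, hp4_zero]
end

section
/- Let T > R > P > S and χ > 1, φ > 0. Define p₁ = 1 − φ(χ−1)(R−P)/(P−S), p₂ = 1 − φ(1 + χ(T−P)/(P−S)), p₃ = φ(χ + (T−P)/(P−S)), p₄ = 0. Then all of p₁, p₂, p₃, p₄ lie in [0,1] if and only if φ ≤ min{ (P−S)/((χ−1)(R−P)), (P−S)/(χ(T−P) + (P−S)), (P−S)/(χ(P−S) + (T−P)) }. -/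
/-- The extortionate strategy probabilities lie in [0,1] iff φ is below the
minimum of the three bounds. -/
theorem extortion_phi_bound (T R P S χ φ : ℝ)
    (hTR : T > R) (hRP : R > P) (hPS : P > S) (hχ : 1 < χ) (hφ : 0 < φ) :
    let p1 := 1 - φ * (χ - 1) * (R - P) / (P - S)
    let p2 := 1 - φ * (1 + χ * (T - P) / (P - S))
    let p3 := φ * (χ + (T - P) / (P - S))
    let p4 := (0 : ℝ)
    (p1 ∈ Set.Icc (0 : ℝ) 1 ∧ p2 ∈ Set.Icc (0 : ℝ) 1 ∧
        p3 ∈ Set.Icc (0 : ℝ) 1 ∧ p4 ∈ Set.Icc (0 : ℝ) 1) ↔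
      φ ≤ min (min ((P - S) / ((χ - 1) * (R - P)))
                   ((P - S) / (χ * (T - P) + (P - S))))
              ((P - S) / (χ * (P - S) + (T - P))) := by
  intro p1 p2 p3 p4
  have hd : (0:ℝ) < P - S := by linarith
  have h1 : (0:ℝ) < (χ - 1) * (R - P) := by nlinarith
  have h2 : (0:ℝ) < χ * (T - P) + (P - S) := by nlinarith
  have h3 : (0:ℝ) < χ * (P - S) + (T - P) := by nlinarith
  have e1 : (T - P) / (P - S) * (P - S) = T - P := div_mul_cancel₀ _ (ne_of_gt hd)
  have e2 : χ * (T - P) / (P - S) * (P - S) = χ * (T - P) := div_mul_cancel₀ _ (ne_of_gt hd)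
  have e3 : φ * (χ - 1) * (R - P) / (P - S) * (P - S) = φ * (χ - 1) * (R - P) :=
    div_mul_cancel₀ _ (ne_of_gt hd)
  simp only [p1, p2, p3, p4, Set.mem_Icc, le_min_iff, le_div_iff₀ h1, le_div_iff₀ h2,
    le_div_iff₀ h3]
  constructor
  · rintro ⟨⟨a1, b1⟩, ⟨a2, b2⟩, ⟨a3, b3⟩, -⟩
    refine ⟨⟨?_, ?_⟩, ?_⟩
    · nlinarith [mul_le_mul_of_nonneg_right (by linarith : φ * (χ - 1) * (R - P) / (P - S) ≤ 1) hd.le]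
    · nlinarith [mul_le_mul_of_nonneg_right (by linarith : φ * (1 + χ * (T - P) / (P - S)) ≤ 1) hd.le]
    · nlinarith [mul_le_mul_of_nonneg_right (by linarith : φ * (χ + (T - P) / (P - S)) ≤ 1) hd.le]
  · rintro ⟨⟨c1, c2⟩, c3⟩
    have hTP : (0:ℝ) < T - P := by linarith
    refine ⟨⟨?_, ?_⟩, ⟨?_, ?_⟩, ⟨?_, ?_⟩, le_refl _, zero_le_one⟩
    · rw [sub_nonneg, div_le_one hd]; nlinarith
    · have h0 : 0 ≤ φ * (χ - 1) * (R - P) / (P - S) :=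
        div_nonneg (by nlinarith) hd.le
      linarith
    · rw [sub_nonneg]
      have hm : φ * (1 + χ * (T - P) / (P - S)) * (P - S) ≤ 1 * (P - S) := by
        nlinarith
      linarith [le_of_mul_le_mul_right hm hd]
    · have h0 : 0 ≤ χ * (T - P) / (P - S) := by positivity
      nlinarith
    · have h0 : 0 ≤ (T - P) / (P - S) := by positivity
      nlinarith
    · have hm : φ * (χ + (T - P) / (P - S)) * (P - S) ≤ 1 * (P - S) := by nlinarith
      exact le_of_mul_le_mul_right hm hd
end

section
/- With (T,R,P,S) = (1.5, 1.25, 1, 0), for every χ > 1 one has (P−S)/(χ(T−P)+(P−S)) = 1/(0.5χ+1) > 1/(χ+0.5) = (P−S)/(χ(P−S)+(T−P)). Hence the bound 0 < φ ≤ (P−S)/(χ(T−P)+(P−S)) stated by Press–Dyson is not sufficient for the extortionate strategy probabilities to lie in [0,1]. -/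
/-- Counterexample to the Press–Dyson bound: with (T,R,P,S) = (1.5,1.25,1,0)
the stated bound (P−S)/(χ(T−P)+(P−S)) is strictly larger than the true binding
bound, and choosing φ within the stated bound can make p₃ > 1. -/
theorem press_dyson_bound_insufficient :
    ∀ χ : ℝ, 1 < χ →
      ((1 : ℝ) - 0) / (χ * ((1.5 : ℝ) - 1) + (1 - 0)) = 1 / (0.5 * χ + 1) ∧
      (1 : ℝ) / (0.5 * χ + 1) > 1 / (χ + 0.5) ∧
      (1 : ℝ) / (χ + 0.5) = (1 - 0) / (χ * (1 - 0) + ((1.5 : ℝ) - 1)) ∧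
      ∃ φ : ℝ, 0 < φ ∧ φ ≤ ((1 : ℝ) - 0) / (χ * ((1.5 : ℝ) - 1) + (1 - 0)) ∧
        1 < φ * (χ + ((1.5 : ℝ) - 1) / (1 - 0)) := by
  intro χ hχ
  have h1 : (0:ℝ) < 0.5 * χ + 1 := by linarith
  have h2 : (0:ℝ) < χ + 0.5 := by linarith
  refine ⟨by ring_nf, ?_, by ring_nf, 1 / (0.5 * χ + 1), by positivity, ?_, ?_⟩
  · exact one_div_lt_one_div_of_lt h1 (by linarith)
  · apply le_of_eq; ring_nf
  · rw [div_mul_eq_mul_div, lt_div_iff₀ h1]; norm_num; linarith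
end
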